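/- arXiv:2007.12109 — 3 statements merged into one kernel-verified Lean document; each statement's English description precedes it below -/
import Mathlib

section
/- The function ℓ_NC induced on the free group F_k is conjugacy invariant: for all g, h in F_k, ℓ_NC(h g h^{-1}) = ℓ_NC(g). -/
/-!
A word `X` realising `ellFG g` can be conjugated letter by letter: wrapping a word `Z` as
`a Z a⁻¹` lets any non-crossing matching of `Z` be extended by the outer pair `(a, a⁻¹)`,
which crosses nothing, so `ell` does not increase. Hence `ellFG (h g h⁻¹) ≤ ellFG g`, and
conjugating back by `h⁻¹` gives the reverse inequality.
-/

open scoped BigOperators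

abbrev Letter (k : ℕ) := Fin k × Bool

def Letter.bar {k : ℕ} (x : Letter k) : Letter k := (x.1, !x.2)

/-- `M` is an (incomplete) non-crossing matching of the word `X`,
pairing letters with their inverse letters. -/
def IsNCMatching {k : ℕ} (X : List (Letter k)) (M : Finset (ℕ × ℕ)) : Prop :=
  (∀ p ∈ M, p.1 < p.2 ∧ p.2 < X.length ∧ X[p.1]? = (X[p.2]?).map Letter.bar) ∧
  (∀ p ∈ M, ∀ q ∈ M, p ≠ q → p.1 ≠ q.1 ∧ p.1 ≠ q.2 ∧ p.2 ≠ q.1 ∧ p.2 ≠ q.2) ∧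
  (∀ p ∈ M, ∀ q ∈ M, ¬ (p.1 < q.1 ∧ q.1 < p.2 ∧ p.2 < q.2))

/-- minimal number of unmatched letters over all non-crossing matchings of `X`. -/
noncomputable def ell {k : ℕ} (X : List (Letter k)) : ℕ :=
  sInf {m | ∃ M : Finset (ℕ × ℕ), IsNCMatching X M ∧ m = X.length - 2 * M.card}

/-- `L_k(n)`: the expected value of `ell` over uniformly random words of length `n`. -/
noncomputable def Lk (k n : ℕ) : ℝ :=
  (∑ w : Fin n → Letter k, (ell (List.ofFn w) : ℝ)) / (2 * k) ^ n

noncomputable def lambda (k : ℕ) : ℝ := ⨅ n : ℕ+, Lk k n / n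

theorem test : True := trivial

/-- The function induced by `ell` on the free group. -/
noncomputable def ellFG {k : ℕ} (g : FreeGroup (Fin k)) : ℕ :=
  sInf {m | ∃ X : List (Letter k), FreeGroup.mk X = g ∧ m = ell X}

namespace IsNCMatching

variable {k : ℕ} {X : List (Letter k)} {M : Finset (ℕ × ℕ)}

theorem append_right (hM : IsNCMatching X M) (Y : List (Letter k)) :
    IsNCMatching (X ++ Y) M := by
  refine ⟨fun p hp => ?_, hM.2.1, hM.2.2⟩
  obtain ⟨h12, h2, hbar⟩ := hM.1 p hp
  refine ⟨h12, by simp; omega, ?_⟩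
  rwa [List.getElem?_append_left (h12.trans h2), List.getElem?_append_left h2]

def shift : ℕ × ℕ ↪ ℕ × ℕ :=
  ⟨Prod.map Nat.succ Nat.succ, Nat.succ_injective.prodMap Nat.succ_injective⟩

theorem cons (hM : IsNCMatching X M) (a : Letter k) :
    IsNCMatching (a :: X) (M.map shift) := by
  simp only [IsNCMatching, Finset.forall_mem_map, shift, Function.Embedding.coeFn_mk,
    Prod.map_fst, Prod.map_snd, List.length_cons, List.getElem?_cons_succ]
  refine ⟨fun p hp => ?_, fun p hp q hq hpq => ?_, fun p hp q hq => ?_⟩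
  · obtain ⟨h12, h2, hbar⟩ := hM.1 p hp
    exact ⟨by omega, by omega, hbar⟩
  · have hpq' : p ≠ q := fun h => hpq (h ▸ rfl)
    have := hM.2.1 p hp q hq hpq'
    omega
  · have := hM.2.2 p hp q hq
    omega

theorem insert_enclosing (hM : IsNCMatching X M) {i j : ℕ} (hij : i < j)
    (hj : j < X.length) (hbar : X[i]? = (X[j]?).map Letter.bar)
    (hinside : ∀ p ∈ M, i < p.1 ∧ p.2 < j) :
    IsNCMatching X (insert (i, j) M) := by
  have hlt : ∀ p ∈ M, p.1 < p.2 := fun p hp => (hM.1 p hp).1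
  simp only [IsNCMatching, Finset.mem_insert]
  refine ⟨?_, ?_, ?_⟩
  · rintro p (rfl | hp)
    exacts [⟨hij, hj, hbar⟩, hM.1 p hp]
  · rintro p (rfl | hp) q (rfl | hq) hpq
    · exact absurd rfl hpq
    · have := hinside q hq; have := hlt q hq; omega
    · have := hinside p hp; have := hlt p hp; omega
    · exact hM.2.1 p hp q hq hpq
  · rintro p (rfl | hp) q (rfl | hq)
    · omega
    · have := hinside q hq; omega
    · have := hinside p hp; omega
    · exact hM.2.2 p hp q hq

end IsNCMatching

section ell

variable {k : ℕ}

theorem ell_le {X : List (Letter k)} {M : Finset (ℕ × ℕ)} (hM : IsNCMatching X M) :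
    ell X ≤ X.length - 2 * M.card :=
  Nat.sInf_le ⟨M, hM, rfl⟩

theorem exists_isNCMatching_ell_eq (X : List (Letter k)) :
    ∃ M, IsNCMatching X M ∧ ell X = X.length - 2 * M.card := by
  have hne : ∃ m, ∃ M, IsNCMatching X M ∧ m = X.length - 2 * M.card :=
    ⟨X.length, ∅, by simp [IsNCMatching], by simp⟩
  exact Nat.sInf_mem hne

theorem ell_cons_append_bar_le (a : Letter k) (Z : List (Letter k)) :
    ell (a :: (Z ++ [a.bar])) ≤ ell Z := by
  obtain ⟨M, hM, hZ⟩ := exists_isNCMatching_ell_eq Z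
  set M' := insert (0, Z.length + 1) (M.map IsNCMatching.shift)
  have hWrap : IsNCMatching ((a :: Z) ++ [a.bar]) M' := by
    refine ((hM.cons a).append_right _).insert_enclosing (by omega) (by simp) ?_ ?_
    · simp [Letter.bar]
    · simp only [Finset.forall_mem_map, IsNCMatching.shift, Function.Embedding.coeFn_mk,
        Prod.map_fst, Prod.map_snd]
      exact fun p hp => ⟨Nat.succ_pos _, Nat.succ_lt_succ (hM.1 p hp).2.1⟩
  have hcard : M'.card = M.card + 1 := by
    rw [Finset.card_insert_of_notMem (by simp [IsNCMatching.shift]), Finset.card_map]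
  rw [← List.cons_append]
  refine (ell_le hWrap).trans ?_
  simp only [hcard, List.length_append, List.length_cons, List.length_nil]
  omega

theorem ell_append_append_invRev_le (W X : List (Letter k)) :
    ell (W ++ X ++ FreeGroup.invRev W) ≤ ell X := by
  induction W with
  | nil => simp [FreeGroup.invRev]
  | cons a W ih =>
    have hword : a :: W ++ X ++ FreeGroup.invRev (a :: W)
        = a :: ((W ++ X ++ FreeGroup.invRev W) ++ [a.bar]) := by
      simp [FreeGroup.invRev, Letter.bar]
    exact hword ▸ (ell_cons_append_bar_le a _).trans ih

end ell

section ellFG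

variable {k : ℕ}

theorem ellFG_le_ell {g : FreeGroup (Fin k)} {X : List (Letter k)} (hX : FreeGroup.mk X = g) :
    ellFG g ≤ ell X :=
  Nat.sInf_le ⟨X, hX, rfl⟩

theorem exists_mk_eq_ell_eq_ellFG (g : FreeGroup (Fin k)) :
    ∃ X : List (Letter k), FreeGroup.mk X = g ∧ ellFG g = ell X := by
  have hne : ∃ m, ∃ X : List (Letter k), FreeGroup.mk X = g ∧ m = ell X :=
    ⟨ell g.toWord, g.toWord, FreeGroup.mk_toWord, rfl⟩
  exact Nat.sInf_mem hne

theorem ellFG_conj_le (g h : FreeGroup (Fin k)) : ellFG (h * g * h⁻¹) ≤ ellFG g := by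
  obtain ⟨X, rfl, hX⟩ := exists_mk_eq_ell_eq_ellFG g
  have hmk : FreeGroup.mk (h.toWord ++ X ++ FreeGroup.invRev h.toWord)
      = h * FreeGroup.mk X * h⁻¹ := by
    rw [← FreeGroup.mul_mk, ← FreeGroup.mul_mk, ← FreeGroup.inv_mk, FreeGroup.mk_toWord]
  exact hX ▸ (ellFG_le_ell hmk).trans (ell_append_append_invRev_le _ X)

end ellFG

/-- `ℓ_NC` is conjugacy invariant on the free group. -/
theorem ellFG_conj_invariant {k : ℕ} (g h : FreeGroup (Fin k)) :
    ellFG (h * g * h⁻¹) = ellFG g := by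
  refine (ellFG_conj_le g h).antisymm ?_
  simpa [mul_assoc] using ellFG_conj_le (h * g * h⁻¹) h⁻¹
end

section
/- λ_k → 1 as k → ∞: the asymptotic expected unmatched fraction for random words over 2k letters tends to 1. -/
open scoped BigOperators

/-!
A word of length `n` carrying a noncrossing matching with `m` arcs is determined by the sets of
openers and closers (at most `4 ^ n` choices, since these sets determine the matching) and by its
letters off the closers, so there are at most `4 ^ n (2k) ^ (n - m)` such words. For
`m = ⌊n / a⌋ + 1` and `4 ^ a a ≤ 2k` this is at most a `1 / a` fraction of all words, and every
other word leaves at least `n - 2 ⌊n / a⌋` letters unmatched. Hence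
`λ_k ≥ (1 - 2 / a) (1 - 1 / a) ≥ 1 - 3 / a`, while `λ_k ≤ 1` trivially.
-/

open Finset Filter
open scoped Classical

theorem Finset.image_erase_of_injOn {α β : Type*} [DecidableEq α] [DecidableEq β] {f : α → β}
    {s : Finset α} (hf : Set.InjOn f s) {a : α} (ha : a ∈ s) :
    (s.erase a).image f = (s.image f).erase (f a) := by
  ext b
  simp only [mem_image, mem_erase]
  constructor
  · rintro ⟨x, ⟨hxa, hx⟩, rfl⟩
    exact ⟨fun h => hxa (hf hx ha h), x, hx, rfl⟩
  · rintro ⟨hb, x, hx, rfl⟩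
    exact ⟨x, ⟨by rintro rfl; exact hb rfl, hx⟩, rfl⟩

def IsNoncrossing (M : Finset (ℕ × ℕ)) : Prop :=
  (∀ p ∈ M, p.1 < p.2) ∧
  (∀ p ∈ M, ∀ q ∈ M, p ≠ q → p.1 ≠ q.1 ∧ p.1 ≠ q.2 ∧ p.2 ≠ q.1 ∧ p.2 ≠ q.2) ∧
  (∀ p ∈ M, ∀ q ∈ M, ¬ (p.1 < q.1 ∧ q.1 < p.2 ∧ p.2 < q.2))

namespace IsNoncrossing

variable {M M' : Finset (ℕ × ℕ)}

theorem mono (hM : IsNoncrossing M) (hsub : M' ⊆ M) : IsNoncrossing M' :=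
  ⟨fun p hp => hM.1 p (hsub hp), fun p hp q hq => hM.2.1 p (hsub hp) q (hsub hq),
    fun p hp q hq => hM.2.2 p (hsub hp) q (hsub hq)⟩

theorem fst_ne_snd (hM : IsNoncrossing M) {p q : ℕ × ℕ} (hp : p ∈ M) (hq : q ∈ M) :
    p.1 ≠ q.2 := by
  rcases eq_or_ne p q with rfl | hpq
  · exact (hM.1 p hp).ne
  · exact (hM.2.1 p hp q hq hpq).2.1

theorem injOn_fst (hM : IsNoncrossing M) : Set.InjOn Prod.fst (M : Set (ℕ × ℕ)) :=
  fun p hp q hq h => by_contra fun hpq => (hM.2.1 p hp q hq hpq).1 h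

theorem injOn_snd (hM : IsNoncrossing M) : Set.InjOn Prod.snd (M : Set (ℕ × ℕ)) :=
  fun p hp q hq h => by_contra fun hpq => (hM.2.1 p hp q hq hpq).2.2.2 h

theorem fst_le_of_forall_snd_le (hM : IsNoncrossing M) {p : ℕ × ℕ} (hp : p ∈ M)
    (hmin : ∀ q ∈ M, p.2 ≤ q.2) {x : ℕ} (hx : x ∈ M.image Prod.fst) (hxp : x < p.2) :
    x ≤ p.1 := by
  obtain ⟨q, hq, rfl⟩ := mem_image.1 hx
  by_contra! hpq
  have hne : q ≠ p := by rintro rfl; exact lt_irrefl _ hpq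
  have hpq₂ : p.2 < q.2 := (hmin q hq).lt_of_ne (hM.2.1 q hq p hp hne).2.2.2.symm
  exact hM.2.2 p hp q hq ⟨hpq, hxp, hpq₂⟩

/-- Peel off the arc that closes first: its opener is the last opener before its closer. -/
theorem eq_of_image_fst_eq_of_image_snd_eq (hM : IsNoncrossing M) (hM' : IsNoncrossing M')
    (hfst : M.image Prod.fst = M'.image Prod.fst) (hsnd : M.image Prod.snd = M'.image Prod.snd) :
    M = M' := by
  induction M using Finset.strongInduction generalizing M' with
  | H M ih =>
  rcases M.eq_empty_or_nonempty with rfl | hne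
  · rw [image_empty, eq_comm, image_eq_empty] at hsnd
    exact hsnd.symm
  obtain ⟨p, hp, hmin⟩ := M.exists_min_image Prod.snd hne
  obtain ⟨p', hp', hpp'⟩ := mem_image.1 (hsnd ▸ mem_image_of_mem Prod.snd hp)
  have hmin' : ∀ q ∈ M', p'.2 ≤ q.2 := fun q hq => by
    obtain ⟨r, hr, hrq⟩ := mem_image.1 (hsnd.symm ▸ mem_image_of_mem Prod.snd hq)
    rw [hpp', ← hrq]
    exact hmin r hr
  have hle : p'.1 ≤ p.1 := hM.fst_le_of_forall_snd_le hp hmin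
    (hfst ▸ mem_image_of_mem Prod.fst hp') (hpp' ▸ hM'.1 p' hp')
  have hge : p.1 ≤ p'.1 := hM'.fst_le_of_forall_snd_le hp' hmin'
    (hfst.symm ▸ mem_image_of_mem Prod.fst hp) (hpp'.symm ▸ hM.1 p hp)
  obtain rfl : p = p' := Prod.ext (le_antisymm hge hle) hpp'.symm
  rw [← insert_erase hp, ← insert_erase hp',
    ih _ (erase_ssubset hp) (hM.mono (erase_subset _ _)) (hM'.mono (erase_subset _ _))
      (by rw [image_erase_of_injOn hM.injOn_fst hp, image_erase_of_injOn hM'.injOn_fst hp', hfst])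
      (by rw [image_erase_of_injOn hM.injOn_snd hp, image_erase_of_injOn hM'.injOn_snd hp', hsnd])]

theorem card_le_four_pow {n : ℕ} {𝓜 : Finset (Finset (ℕ × ℕ))}
    (h𝓜 : ∀ M ∈ 𝓜, IsNoncrossing M ∧ M ⊆ range n ×ˢ range n) : #𝓜 ≤ 4 ^ n := by
  have hmaps : Set.MapsTo (fun M : Finset (ℕ × ℕ) => (M.image Prod.fst, M.image Prod.snd)) 𝓜
      ↑((range n).powerset ×ˢ (range n).powerset) := by
    intro M hM
    have hsub := (h𝓜 M hM).2
    simp only [coe_product, Set.mem_prod, mem_coe, mem_powerset]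
    exact ⟨fun x hx => by
      obtain ⟨p, hp, rfl⟩ := mem_image.1 hx; exact (mem_product.1 (hsub hp)).1,
      fun x hx => by
      obtain ⟨p, hp, rfl⟩ := mem_image.1 hx; exact (mem_product.1 (hsub hp)).2⟩
  have hinj : Set.InjOn (fun M : Finset (ℕ × ℕ) => (M.image Prod.fst, M.image Prod.snd)) 𝓜 :=
    fun M hM M' hM' h => eq_of_image_fst_eq_of_image_snd_eq (h𝓜 M hM).1 (h𝓜 M' hM').1
      (congrArg Prod.fst h) (congrArg Prod.snd h)
  calc #𝓜 ≤ #((range n).powerset ×ˢ (range n).powerset) := card_le_card_of_injOn _ hmaps hinj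
    _ = 4 ^ n := by
      rw [card_product, card_powerset, card_range, ← mul_pow]
      norm_num

end IsNoncrossing

section Words

variable {k n : ℕ}

theorem Letter.card_eq : Fintype.card (Letter k) = 2 * k := by
  simp [Letter, mul_comm]

namespace IsNCMatching

variable {X : List (Letter k)} {M M' : Finset (ℕ × ℕ)}

theorem isNoncrossing (h : IsNCMatching X M) : IsNoncrossing M :=
  ⟨fun p hp => (h.1 p hp).1, h.2.1, h.2.2⟩

theorem mono (h : IsNCMatching X M) (hsub : M' ⊆ M) : IsNCMatching X M' :=
  ⟨fun p hp => h.1 p (hsub hp), fun p hp q hq => h.2.1 p (hsub hp) q (hsub hq),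
    fun p hp q hq => h.2.2 p (hsub hp) q (hsub hq)⟩

theorem subset_range_product (h : IsNCMatching X M) :
    M ⊆ range X.length ×ˢ range X.length := fun p hp => by
  obtain ⟨h₁, h₂, -⟩ := h.1 p hp
  exact mem_product.2 ⟨mem_range.2 (h₁.trans h₂), mem_range.2 h₂⟩

theorem ofFn_apply_snd {w : Fin n → Letter k} (h : IsNCMatching (List.ofFn w) M) {p : ℕ × ℕ}
    (hp : p ∈ M) (h₁ : p.1 < n) (h₂ : p.2 < n) : w ⟨p.2, h₂⟩ = (w ⟨p.1, h₁⟩).bar := by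
  have h := (h.1 p hp).2.2
  rw [List.getElem?_ofFn, List.getElem?_ofFn, dif_pos h₁, dif_pos h₂] at h
  simpa [Letter.bar] using congrArg (Option.map Letter.bar) h.symm

end IsNCMatching

theorem card_filter_isNCMatching_le {M : Finset (ℕ × ℕ)} (hM : IsNoncrossing M)
    (hMn : M ⊆ range n ×ˢ range n) :
    #{w : Fin n → Letter k | IsNCMatching (List.ofFn w) M} ≤ (2 * k) ^ (n - #M) := by
  set C := M.image Prod.snd
  have hC : C ⊆ range n := fun j hj => by
    obtain ⟨p, hp, rfl⟩ := mem_image.1 hj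
    exact (mem_product.1 (hMn hp)).2
  let restrict (w : Fin n → Letter k) (i : ↥(range n \ C)) : Letter k :=
    w ⟨i, mem_range.1 (mem_sdiff.1 i.2).1⟩
  have hinj : Set.InjOn restrict {w | IsNCMatching (List.ofFn w) M} := by
    intro w hw w' hw' hww'
    have hoff : ∀ i (hi : i < n), i ∉ C → w ⟨i, hi⟩ = w' ⟨i, hi⟩ := fun i hi hiC =>
      congrFun hww' ⟨i, mem_sdiff.2 ⟨mem_range.2 hi, hiC⟩⟩
    funext ⟨i, hi⟩
    by_cases hiC : i ∈ C
    · obtain ⟨p, hp, rfl⟩ := mem_image.1 hiC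
      have h₁ : p.1 < n := mem_range.1 (mem_product.1 (hMn hp)).1
      have hp₁ : p.1 ∉ C := fun h => by
        obtain ⟨q, hq, hqp⟩ := mem_image.1 h
        exact hM.fst_ne_snd hp hq hqp.symm
      rw [IsNCMatching.ofFn_apply_snd hw hp h₁, IsNCMatching.ofFn_apply_snd hw' hp h₁,
        hoff _ h₁ hp₁]
    · exact hoff i hi hiC
  calc #{w : Fin n → Letter k | IsNCMatching (List.ofFn w) M}
      ≤ #(univ : Finset (↥(range n \ C) → Letter k)) :=
        card_le_card_of_injOn restrict (fun _ _ => mem_coe.2 (mem_univ _))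
          (by simpa only [coe_filter, mem_univ, true_and] using hinj)
    _ = (2 * k) ^ (n - #M) := by
      rw [card_univ, Fintype.card_fun, Letter.card_eq, Fintype.card_coe,
        card_sdiff_of_subset hC, card_range, card_image_of_injOn hM.injOn_snd]

theorem card_filter_exists_isNCMatching_le (k n m : ℕ) :
    #{w : Fin n → Letter k | ∃ M, IsNCMatching (List.ofFn w) M ∧ m ≤ #M}
      ≤ 4 ^ n * (2 * k) ^ (n - m) := by
  set 𝓜 := {M ∈ powersetCard m (range n ×ˢ range n) | IsNoncrossing M}
  have h𝓜 : ∀ M ∈ 𝓜, IsNoncrossing M ∧ M ⊆ range n ×ˢ range n ∧ #M = m := fun M hM => by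
    obtain ⟨hM, hnc⟩ := mem_filter.1 hM
    exact ⟨hnc, mem_powersetCard.1 hM⟩
  have hcover : ({w : Fin n → Letter k | ∃ M, IsNCMatching (List.ofFn w) M ∧ m ≤ #M} : Finset _)
      ⊆ 𝓜.biUnion fun M => {w : Fin n → Letter k | IsNCMatching (List.ofFn w) M} := by
    intro w hw
    obtain ⟨M, hM, hm⟩ := (mem_filter.1 hw).2
    obtain ⟨M', hM'M, hM'⟩ := exists_subset_card_eq hm
    have hw' := hM.mono hM'M
    have hsub := hw'.subset_range_product
    rw [List.length_ofFn] at hsub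
    exact mem_biUnion.2 ⟨M', mem_filter.2 ⟨mem_powersetCard.2 ⟨hsub, hM'⟩, hw'.isNoncrossing⟩,
      mem_filter.2 ⟨mem_univ _, hw'⟩⟩
  calc _ ≤ #(𝓜.biUnion fun M => {w : Fin n → Letter k | IsNCMatching (List.ofFn w) M}) :=
        card_le_card hcover
    _ ≤ ∑ M ∈ 𝓜, #{w : Fin n → Letter k | IsNCMatching (List.ofFn w) M} := card_biUnion_le
    _ ≤ ∑ _M ∈ 𝓜, (2 * k) ^ (n - m) := sum_le_sum fun M hM => by
        obtain ⟨hnc, hsub, rfl⟩ := h𝓜 M hM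
        exact card_filter_isNCMatching_le hnc hsub
    _ ≤ 4 ^ n * (2 * k) ^ (n - m) := by
        rw [sum_const, smul_eq_mul]
        exact Nat.mul_le_mul_right _
          (IsNoncrossing.card_le_four_pow fun M hM => ⟨(h𝓜 M hM).1, (h𝓜 M hM).2.1⟩)

theorem isNCMatching_empty (X : List (Letter k)) : IsNCMatching X ∅ := by
  refine ⟨?_, ?_, ?_⟩ <;> simp

theorem ell_le_length (X : List (Letter k)) : ell X ≤ X.length :=
  Nat.sInf_le ⟨∅, isNCMatching_empty X, by simp⟩

theorem length_le_ell_add {X : List (Letter k)} {t : ℕ} (h : ∀ M, IsNCMatching X M → #M ≤ t) :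
    X.length ≤ ell X + 2 * t := by
  obtain ⟨M, hM, hm⟩ : ell X ∈ {m | ∃ M, IsNCMatching X M ∧ m = X.length - 2 * #M} :=
    Nat.sInf_mem ⟨_, ∅, isNCMatching_empty X, rfl⟩
  have := h M hM
  omega

theorem card_nsmul_le_sum_ell (k n t : ℕ) :
    (n - 2 * t) * ((2 * k) ^ n -
        #{w : Fin n → Letter k | ∃ M, IsNCMatching (List.ofFn w) M ∧ t + 1 ≤ #M})
      ≤ ∑ w : Fin n → Letter k, ell (List.ofFn w) := by
  set P := fun w : Fin n → Letter k => ∃ M, IsNCMatching (List.ofFn w) M ∧ t + 1 ≤ #M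
  have hcard : #{w | ¬ P w} = (2 * k) ^ n - #{w | P w} := by
    rw [filter_not, card_sdiff_of_subset (filter_subset _ _), card_univ, Fintype.card_fun,
      Letter.card_eq, Fintype.card_fin]
  have hgood : ∀ w ∈ ({w | ¬ P w} : Finset _), n - 2 * t ≤ ell (List.ofFn w) := fun w hw => by
    have h := length_le_ell_add (t := t) fun M hM => by
      by_contra! hlt
      exact (mem_filter.1 hw).2 ⟨M, hM, hlt⟩
    rw [List.length_ofFn] at h
    omega
  calc _ = #{w | ¬ P w} • (n - 2 * t) := by rw [hcard, smul_eq_mul, mul_comm]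
    _ ≤ ∑ w ∈ {w | ¬ P w}, ell (List.ofFn w) := card_nsmul_le_sum _ _ _ hgood
    _ ≤ ∑ w, ell (List.ofFn w) := sum_le_sum_of_subset (filter_subset _ _)

end Words

theorem mul_card_filter_exists_isNCMatching_le {k n a : ℕ} (ha : 0 < a)
    (hk : 4 ^ a * a ≤ 2 * k) (hn : n / a < n) :
    a * #{w : Fin n → Letter k | ∃ M, IsNCMatching (List.ofFn w) M ∧ n / a + 1 ≤ #M}
      ≤ (2 * k) ^ n := by
  set t := n / a
  have hpow : 4 ^ n * a ≤ (2 * k) ^ (t + 1) := calc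
    4 ^ n * a ≤ 4 ^ (a * (t + 1)) * a ^ (t + 1) :=
        Nat.mul_le_mul (Nat.pow_le_pow_right (by norm_num) (Nat.lt_mul_div_succ n ha).le)
          (Nat.le_self_pow t.succ_ne_zero a)
    _ = (4 ^ a * a) ^ (t + 1) := by rw [mul_pow, pow_mul]
    _ ≤ (2 * k) ^ (t + 1) := Nat.pow_le_pow_left hk _
  calc _ ≤ a * (4 ^ n * (2 * k) ^ (n - (t + 1))) :=
        Nat.mul_le_mul_left a (card_filter_exists_isNCMatching_le k n (t + 1))
    _ = 4 ^ n * a * (2 * k) ^ (n - (t + 1)) := by ring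
    _ ≤ (2 * k) ^ (t + 1) * (2 * k) ^ (n - (t + 1)) := Nat.mul_le_mul_right _ hpow
    _ = (2 * k) ^ n := by rw [← pow_add, Nat.add_sub_cancel' hn]

theorem one_sub_three_div_le_Lk_div {k n a : ℕ} (ha : 2 ≤ a) (hk : 4 ^ a * a ≤ 2 * k)
    (hn : 0 < n) : 1 - 3 / (a : ℝ) ≤ Lk k n / n := by
  set t := n / a
  set B := #{w : Fin n → Letter k | ∃ M, IsNCMatching (List.ofFn w) M ∧ t + 1 ≤ #M}
  have hat : a * t ≤ n := Nat.mul_div_le n a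
  have hB : a * B ≤ (2 * k) ^ n :=
    mul_card_filter_exists_isNCMatching_le (by omega) hk (Nat.div_lt_self hn (by omega))
  have haR : (0 : ℝ) < a := by positivity
  have hk0 : 0 < k := by
    have : 0 < 4 ^ a * a := by positivity
    omega
  have hunmatched : (n : ℝ) * (1 - 2 / a) ≤ ((n - 2 * t : ℕ) : ℝ) := by
    have ht : (t : ℝ) ≤ n / a := by
      rw [le_div_iff₀ haR, mul_comm]
      exact_mod_cast hat
    rw [Nat.cast_sub ((Nat.mul_le_mul_right t ha).trans hat)]
    push_cast
    linarith [show (n : ℝ) * (1 - 2 / a) = n - 2 * (n / a) by ring]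
  have hfew : (2 * k : ℝ) ^ n * (1 - 1 / a) ≤ (((2 * k) ^ n - B : ℕ) : ℝ) := by
    have hB' : (B : ℝ) ≤ (2 * k : ℝ) ^ n / a := by
      rw [le_div_iff₀ haR, mul_comm]
      exact_mod_cast hB
    rw [Nat.cast_sub ((Nat.le_mul_of_pos_left B (by omega)).trans hB)]
    push_cast
    linarith [show (2 * k : ℝ) ^ n * (1 - 1 / a) = (2 * k) ^ n - (2 * k) ^ n / a by ring]
  have hsum : ((n - 2 * t : ℕ) : ℝ) * (((2 * k) ^ n - B : ℕ) : ℝ)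
      ≤ ∑ w : Fin n → Letter k, (ell (List.ofFn w) : ℝ) := by
    exact_mod_cast card_nsmul_le_sum_ell k n t
  have hprod : 1 - 3 / (a : ℝ) ≤ (1 - 2 / a) * (1 - 1 / a) := by
    have : 0 ≤ 2 / (a : ℝ) ^ 2 := by positivity
    linarith [show (1 - 2 / (a : ℝ)) * (1 - 1 / a) = 1 - 3 / a + 2 / a ^ 2 by ring]
  have hinv : 0 ≤ 1 - 1 / (a : ℝ) := by
    rw [sub_nonneg, div_le_one haR]
    exact_mod_cast (by omega : 1 ≤ a)
  rw [Lk, div_div, le_div_iff₀ (by positivity)]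
  calc (1 - 3 / (a : ℝ)) * ((2 * k : ℝ) ^ n * n)
      ≤ (1 - 2 / a) * (1 - 1 / a) * ((2 * k : ℝ) ^ n * n) :=
        mul_le_mul_of_nonneg_right hprod (by positivity)
    _ = ((n : ℝ) * (1 - 2 / a)) * ((2 * k : ℝ) ^ n * (1 - 1 / a)) := by ring
    _ ≤ ((n - 2 * t : ℕ) : ℝ) * (((2 * k) ^ n - B : ℕ) : ℝ) :=
        mul_le_mul hunmatched hfew (by positivity) (Nat.cast_nonneg _)
    _ ≤ _ := hsum

theorem Lk_nonneg (k n : ℕ) : 0 ≤ Lk k n := by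
  unfold Lk
  positivity

theorem Lk_le (k n : ℕ) : Lk k n ≤ n := by
  rcases eq_or_ne ((2 * k : ℝ) ^ n) 0 with h | h
  · rw [Lk, h, div_zero]
    positivity
  rw [Lk, div_le_iff₀ ((pow_nonneg (by positivity) n).lt_of_ne h.symm)]
  calc ∑ w : Fin n → Letter k, (ell (List.ofFn w) : ℝ)
      ≤ ∑ _w : Fin n → Letter k, (n : ℝ) := sum_le_sum fun w _ => by
        simpa using (Nat.cast_le (α := ℝ)).2 (ell_le_length (List.ofFn w))
    _ = n * (2 * k) ^ n := by
        rw [sum_const, card_univ, Fintype.card_fun, Letter.card_eq, Fintype.card_fin, nsmul_eq_mul]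
        push_cast
        ring

theorem bddBelow_range_Lk_div (k : ℕ) : BddBelow (Set.range fun n : ℕ+ => Lk k n / (n : ℕ)) :=
  ⟨0, Set.forall_mem_range.2 fun n => div_nonneg (Lk_nonneg k n) n.val.cast_nonneg⟩

theorem lambda_le_one (k : ℕ) : lambda k ≤ 1 :=
  (ciInf_le (bddBelow_range_Lk_div k) 1).trans (by simpa using Lk_le k 1)

theorem one_sub_three_div_le_lambda {k a : ℕ} (ha : 2 ≤ a) (hk : 4 ^ a * a ≤ 2 * k) :
    1 - 3 / (a : ℝ) ≤ lambda k :=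
  le_ciInf fun n => one_sub_three_div_le_Lk_div ha hk n.pos

/-- `λ_k → 1` as `k → ∞`. -/
theorem lambda_tendsto_one :
    Filter.Tendsto (fun k : ℕ => lambda k) Filter.atTop (nhds 1) := by
  refine tendsto_order.2 ⟨fun b hb => ?_, fun b hb => Eventually.of_forall fun k =>
    (lambda_le_one k).trans_lt hb⟩
  obtain ⟨a, ha⟩ := exists_nat_gt (3 / (1 - b))
  have hb : b < 1 - 3 / ((a + 2 : ℕ) : ℝ) := by
    have : 3 / (1 - b) < ((a + 2 : ℕ) : ℝ) := by push_cast; linarith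
    rw [div_lt_iff₀ (by linarith)] at this
    rw [lt_sub_comm, div_lt_iff₀ (by positivity)]
    linarith
  exact eventually_atTop.2 ⟨4 ^ (a + 2) * (a + 2), fun k hk =>
    hb.trans_le (one_sub_three_div_le_lambda (by omega) (by omega))⟩
end

section
/- For k = 2, the asymptotic fraction of letters left unmatched by the one-sided greedy algorithm on a uniform random word over 4 letters equals 3/13; consequently λ_2 ≤ 3/13. -/
open scoped BigOperators

/-- One step of the one-sided greedy algorithm: if the inverse of the arriving letter `x`
occurs in the current word of accessible letters, match `x` with its rightmost occurrence
(discarding everything to its right); otherwise append `x`. -/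
def greedyStep {k : ℕ} (w : List (Letter k)) (x : Letter k) : List (Letter k) :=
  if Letter.bar x ∈ w then w.take (w.length - 1 - w.reverse.idxOf (Letter.bar x))
  else w ++ [x]

/-- The number of letters of `X` left unmatched by the one-sided greedy algorithm:
two letters get matched each time the accessible word shrinks. -/
def greedyUnmatched {k : ℕ} (X : List (Letter k)) : ℕ :=
  X.length - 2 * (X.foldl
    (fun s : List (Letter k) × ℕ => fun x =>
      (greedyStep s.1 x, if (greedyStep s.1 x).length < s.1.length then s.2 + 1 else s.2))
    (([] : List (Letter k)), 0)).2

/-!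
Only the classes of the accessible letters matter. The accessible word never contains a letter
together with its inverse, so a class present in it is carried by one letter only: of the two
letters of that class, one is matched (cutting the word back to just before the last occurrence of
the class) and the other is appended. For `k = 2` this projects the greedy chain onto a chain on
words over `{0, 1}` in which the next letter is matched with probability `(#classes present) / 4`.

Instead of the stationary distribution we use a solution `potential` of the Poisson equation:
its expected increment is `5/13 - P(match)`, where `5/13` is the stationary probability of a
match. Hence `E[#matches] = 5n/13 - E[potential]` after `n` letters, and `E[potential]` stays
bounded because it is dominated by a Lyapunov function with drift factor `1661/1680 < 1`. So the
unmatched fraction tends to `1 - 2 · 5/13 = 3/13`; the greedy matching is non-crossing, whence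
`λ₂ ≤ 3/13`.
-/

namespace List

variable {α β : Type*} [BEq α] [LawfulBEq α] [BEq β] [LawfulBEq β]

def lastIdxOf (a : α) (l : List α) : ℕ := l.length - 1 - l.reverse.idxOf a

def takeBeforeLast (a : α) (l : List α) : List α := l.take (l.lastIdxOf a)

omit [LawfulBEq α] in
theorem lastIdxOf_lt_length {a : α} {l : List α} (h : a ∈ l) : l.lastIdxOf a < l.length := by
  have := length_pos_of_mem h
  unfold lastIdxOf; omega

theorem getElem_lastIdxOf {a : α} {l : List α} (h : a ∈ l) :
    l[l.lastIdxOf a]'(lastIdxOf_lt_length h) = a := by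
  have hrev : l.reverse.idxOf a < l.reverse.length := idxOf_lt_length_iff.2 (mem_reverse.2 h)
  simpa only [lastIdxOf, getElem_reverse, length_reverse] using getElem_idxOf hrev

omit [LawfulBEq α] in
theorem length_takeBeforeLast_lt {a : α} {l : List α} (h : a ∈ l) :
    (l.takeBeforeLast a).length < l.length := by
  rw [takeBeforeLast, length_take]
  exact (min_le_left _ _).trans_lt (lastIdxOf_lt_length h)

theorem takeBeforeLast_append_self (a : α) (l : List α) : (l ++ [a]).takeBeforeLast a = l := by
  rw [takeBeforeLast, lastIdxOf, reverse_append, reverse_singleton, singleton_append,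
    idxOf_cons_self]
  simp

theorem takeBeforeLast_append_of_ne {a b : α} {l : List α} (hba : b ≠ a) (ha : a ∈ l) :
    (l ++ [b]).takeBeforeLast a = l.takeBeforeLast a := by
  have hrev : l.reverse.idxOf a < l.length := by
    simpa using idxOf_lt_length_iff.2 (mem_reverse.2 ha)
  have hidx : (l ++ [b]).lastIdxOf a = l.lastIdxOf a := by
    rw [lastIdxOf, reverse_append, reverse_singleton, singleton_append, idxOf_cons_ne _ hba,
      length_append, length_singleton, lastIdxOf]
    omega
  rw [takeBeforeLast, hidx, take_append_of_le_length (lastIdxOf_lt_length ha).le, takeBeforeLast]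

theorem takeBeforeLast_replicate (a : α) (m : ℕ) :
    (replicate (m + 1) a).takeBeforeLast a = replicate m a := by
  rw [replicate_succ', takeBeforeLast_append_self]

theorem idxOf_map_of_forall {f : α → β} {a : α} :
    ∀ {l : List α}, (∀ y ∈ l, f y = f a → y = a) → (l.map f).idxOf (f a) = l.idxOf a
  | [], _ => rfl
  | y :: l, h => by
    by_cases hya : y = a
    · subst hya
      rw [map_cons, idxOf_cons_self, idxOf_cons_self]
    · have hf : f y ≠ f a := fun hf => hya (h y mem_cons_self hf)
      rw [map_cons, idxOf_cons_ne _ hf, idxOf_cons_ne _ hya,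
        idxOf_map_of_forall fun z hz => h z (mem_cons_of_mem y hz)]

theorem takeBeforeLast_map_of_forall {f : α → β} {a : α} {l : List α}
    (h : ∀ y ∈ l, f y = f a → y = a) :
    (l.map f).takeBeforeLast (f a) = (l.takeBeforeLast a).map f := by
  have hidx : (l.map f).lastIdxOf (f a) = l.lastIdxOf a := by
    rw [lastIdxOf, lastIdxOf, ← map_reverse, length_map,
      idxOf_map_of_forall fun y hy => h y (mem_reverse.1 hy)]
  rw [takeBeforeLast, hidx, takeBeforeLast, map_take]

theorem Pairwise.rel_getElem_of_mem_take {γ : Type*} {R : γ → γ → Prop} {l : List γ}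
    (hl : l.Pairwise R) {i : ℕ} (hi : i < l.length) {j : γ} (hj : j ∈ l.take i) :
    R j l[i] := by
  rw [← take_append_drop i l] at hl
  exact (pairwise_append.1 hl).2.2 j hj _ (by rw [drop_eq_getElem_cons hi]; exact mem_cons_self)

end List

theorem sum_ofFn_succ {α M : Type*} [Fintype α] [AddCommMonoid M] (F : List α → M) (n : ℕ) :
    ∑ u : Fin (n + 1) → α, F (List.ofFn u) =
      ∑ u : Fin n → α, ∑ x, F (List.ofFn u ++ [x]) := by
  rw [← (Fin.snocEquiv fun _ => α).sum_comp, Fintype.sum_prod_type, Finset.sum_comm]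
  refine Finset.sum_congr rfl fun u _ => Finset.sum_congr rfl fun x _ => ?_
  change F (List.ofFn (Fin.snoc u x)) = _
  rw [List.ofFn_succ']
  simp

section Greedy

variable {k : ℕ}

@[simp]
theorem Letter.bar_bar (x : Letter k) : x.bar.bar = x := by
  simp [Letter.bar]

theorem Letter.bar_ne (x : Letter k) : x.bar ≠ x := by
  simp [Letter.bar, Prod.ext_iff]

theorem greedyStep_of_mem {w : List (Letter k)} {x : Letter k} (h : x.bar ∈ w) :
    greedyStep w x = w.takeBeforeLast x.bar :=
  if_pos h

theorem greedyStep_of_not_mem {w : List (Letter k)} {x : Letter k} (h : x.bar ∉ w) :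
    greedyStep w x = w ++ [x] :=
  if_neg h

theorem length_greedyStep_of_mem {w : List (Letter k)} {x : Letter k} (h : x.bar ∈ w) :
    (greedyStep w x).length < w.length := by
  rw [greedyStep_of_mem h]
  exact List.length_takeBeforeLast_lt h

def greedyRun (X : List (Letter k)) : List (Letter k) × ℕ :=
  X.foldl
    (fun s : List (Letter k) × ℕ => fun x =>
      (greedyStep s.1 x, if (greedyStep s.1 x).length < s.1.length then s.2 + 1 else s.2))
    (([] : List (Letter k)), 0)

def greedyState (X : List (Letter k)) : List (Letter k) := (greedyRun X).1

def greedyMatches (X : List (Letter k)) : ℕ := (greedyRun X).2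

theorem greedyUnmatched_eq (X : List (Letter k)) :
    greedyUnmatched X = X.length - 2 * greedyMatches X :=
  rfl

@[simp]
theorem greedyState_nil : greedyState ([] : List (Letter k)) = [] :=
  rfl

@[simp]
theorem greedyMatches_nil : greedyMatches ([] : List (Letter k)) = 0 :=
  rfl

theorem greedyState_append (X : List (Letter k)) (x : Letter k) :
    greedyState (X ++ [x]) = greedyStep (greedyState X) x := by
  simp [greedyState, greedyRun, List.foldl_append]

theorem greedyMatches_append (X : List (Letter k)) (x : Letter k) :
    greedyMatches (X ++ [x]) =
      if (greedyStep (greedyState X) x).length < (greedyState X).length then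
        greedyMatches X + 1
      else greedyMatches X := by
  rw [greedyMatches, greedyRun, List.foldl_append]
  rfl

theorem two_mul_greedyMatches_add_length_le (X : List (Letter k)) :
    2 * greedyMatches X + (greedyState X).length ≤ X.length := by
  induction X using List.reverseRecOn with
  | nil => simp
  | append_singleton X x ih =>
    rw [greedyMatches_append, greedyState_append, List.length_append, List.length_singleton]
    by_cases h : x.bar ∈ greedyState X
    · rw [if_pos (length_greedyStep_of_mem h), greedyStep_of_mem h, List.takeBeforeLast,
        List.length_take]
      have := List.lastIdxOf_lt_length h
      omega
    · rw [greedyStep_of_not_mem h, List.length_append, List.length_singleton, if_neg (by omega)]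
      omega

theorem greedyUnmatched_cast (X : List (Letter k)) :
    (greedyUnmatched X : ℝ) = X.length - 2 * greedyMatches X := by
  have := two_mul_greedyMatches_add_length_le X
  rw [greedyUnmatched_eq, Nat.cast_sub (by omega)]
  push_cast
  ring

end Greedy

section Matching

variable {k : ℕ}

theorem IsNCMatching.append {X : List (Letter k)} {M : Finset (ℕ × ℕ)} (hM : IsNCMatching X M)
    (x : Letter k) : IsNCMatching (X ++ [x]) M := by
  refine ⟨fun p hp => ?_, hM.2.1, hM.2.2⟩
  obtain ⟨h12, h2, hbar⟩ := hM.1 p hp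
  rw [List.getElem?_append_left (h12.trans h2), List.getElem?_append_left h2]
  exact ⟨h12, by rw [List.length_append]; omega, hbar⟩

theorem IsNCMatching.insert {X : List (Letter k)} {M : Finset (ℕ × ℕ)} (hM : IsNCMatching X M)
    {s t : ℕ} (hst : s < t) (ht : t < X.length) (hbar : X[s]? = (X[t]?).map Letter.bar)
    (hlt : ∀ p ∈ M, p.2 < t) (hs : ∀ p ∈ M, ¬ (p.1 ≤ s ∧ s ≤ p.2)) :
    IsNCMatching X (insert (s, t) M) := by
  obtain ⟨hpair, hdisj, hnc⟩ := hM
  have hlt' : ∀ p ∈ M, p.1 < p.2 ∧ p.2 < t ∧ ¬ (p.1 ≤ s ∧ s ≤ p.2) :=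
    fun p hp => ⟨(hpair p hp).1, hlt p hp, hs p hp⟩
  refine ⟨fun p hp => ?_, fun p hp q hq hpq => ?_, fun p hp q hq => ?_⟩
  · rcases Finset.mem_insert.1 hp with rfl | hp
    · exact ⟨hst, ht, hbar⟩
    · exact hpair p hp
  · rcases Finset.mem_insert.1 hp with rfl | hp <;> rcases Finset.mem_insert.1 hq with rfl | hq
    · exact absurd rfl hpq
    · have := hlt' q hq; dsimp only; omega
    · have := hlt' p hp; dsimp only; omega
    · exact hdisj p hp q hq hpq
  · rcases Finset.mem_insert.1 hp with rfl | hp <;> rcases Finset.mem_insert.1 hq with rfl | hq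
    · dsimp only; omega
    · have := hlt' q hq; dsimp only; omega
    · have := hlt' p hp; dsimp only; omega
    · exact hnc p hp q hq

/-- The accessible letters sit at positions `e` that no arc of `M` covers; this is what keeps a
new arc, which ends at the current position, from crossing the old ones. -/
structure GreedyTrace (X : List (Letter k)) (M : Finset (ℕ × ℕ)) (e : List ℕ) : Prop where
  isNCMatching : IsNCMatching X M
  card_eq : M.card = greedyMatches X
  sorted : e.Pairwise (· < ·)
  uncovered : ∀ j ∈ e, j < X.length ∧ ∀ p ∈ M, ¬ (p.1 ≤ j ∧ j ≤ p.2)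
  letters : e.map (X[·]?) = (greedyState X).map some

theorem map_getElem?_append_singleton {X : List (Letter k)} {e : List ℕ}
    (he : ∀ j ∈ e, j < X.length) (x : Letter k) :
    e.map ((X ++ [x])[·]?) = e.map (X[·]?) :=
  List.map_congr_left fun j hj => List.getElem?_append_left (he j hj)

theorem GreedyTrace.append_of_not_mem {X : List (Letter k)} {M : Finset (ℕ × ℕ)} {e : List ℕ}
    (h : GreedyTrace X M e) {x : Letter k} (hx : x.bar ∉ greedyState X) :
    GreedyTrace (X ++ [x]) M (e ++ [X.length]) where
  isNCMatching := h.isNCMatching.append x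
  card_eq := by
    rw [h.card_eq, greedyMatches_append, greedyStep_of_not_mem hx, if_neg (by simp)]
  sorted := List.pairwise_append.2
    ⟨h.sorted, List.pairwise_singleton _ _, fun j hj _ hn => by
      rw [List.mem_singleton.1 hn]; exact (h.uncovered j hj).1⟩
  uncovered j hj := by
    rcases List.mem_append.1 hj with hj | hj
    · exact ⟨by rw [List.length_append]; have := (h.uncovered j hj).1; omega,
        (h.uncovered j hj).2⟩
    · rw [List.mem_singleton.1 hj]
      refine ⟨by simp, fun p hp => ?_⟩
      have := (h.isNCMatching.1 p hp).2.1
      omega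
  letters := by
    rw [List.map_append, map_getElem?_append_singleton (fun j hj => (h.uncovered j hj).1),
      h.letters, greedyState_append, greedyStep_of_not_mem hx]
    simp

theorem GreedyTrace.append_of_mem {X : List (Letter k)} {M : Finset (ℕ × ℕ)} {e : List ℕ}
    (h : GreedyTrace X M e) {x : Letter k} (hx : x.bar ∈ greedyState X) :
    ∃ s, GreedyTrace (X ++ [x]) (insert (s, X.length) M)
      (e.take ((greedyState X).lastIdxOf x.bar)) := by
  set i := (greedyState X).lastIdxOf x.bar
  have hiw : i < (greedyState X).length := List.lastIdxOf_lt_length hx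
  have hlen : e.length = (greedyState X).length := by simpa using congrArg List.length h.letters
  have hi : i < e.length := hlen ▸ hiw
  have hs : X[e[i]]? = some x.bar := by
    have := congrArg (·[i]?) h.letters
    simp only [List.getElem?_map, List.getElem?_eq_getElem hi, List.getElem?_eq_getElem hiw,
      Option.map_some, Option.some_inj] at this
    rw [this, List.getElem_lastIdxOf hx]
  have hlt : ∀ j ∈ e, j < X.length := fun j hj => (h.uncovered j hj).1
  have hsX : e[i] < X.length := hlt _ (List.getElem_mem hi)
  refine ⟨e[i], ⟨?_, ?_, h.sorted.sublist (List.take_sublist _ _), fun j hj => ?_, ?_⟩⟩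
  · refine (h.isNCMatching.append x).insert hsX (by simp) ?_
      (fun p hp => (h.isNCMatching.1 p hp).2.1) (h.uncovered _ (List.getElem_mem hi)).2
    rw [List.getElem?_append_left hsX, hs, List.getElem?_concat_length]
    rfl
  · rw [Finset.card_insert_of_notMem, h.card_eq, greedyMatches_append,
      if_pos (length_greedyStep_of_mem hx)]
    exact fun hmem => lt_irrefl _ (h.isNCMatching.1 _ hmem).2.1
  · have hje := List.mem_of_mem_take hj
    have hji : j < e[i] := h.sorted.rel_getElem_of_mem_take hi hj
    refine ⟨by rw [List.length_append]; have := hlt j hje; omega, ?_⟩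
    rw [Finset.forall_mem_insert]
    exact ⟨fun hc => by dsimp only at hc; omega, (h.uncovered j hje).2⟩
  · rw [map_getElem?_append_singleton fun j hj => hlt j (List.mem_of_mem_take hj), List.map_take,
      h.letters, ← List.map_take, greedyState_append, greedyStep_of_mem hx]
    rfl

theorem exists_greedyTrace (X : List (Letter k)) : ∃ M e, GreedyTrace X M e := by
  induction X using List.reverseRecOn with
  | nil => exact ⟨∅, [], ⟨⟨by simp, by simp, by simp⟩, rfl, .nil, by simp, rfl⟩⟩
  | append_singleton X x ih =>
    obtain ⟨M, e, h⟩ := ih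
    by_cases hx : x.bar ∈ greedyState X
    · obtain ⟨s, hs⟩ := h.append_of_mem hx
      exact ⟨_, _, hs⟩
    · exact ⟨_, _, h.append_of_not_mem hx⟩

theorem ell_le_greedyUnmatched (X : List (Letter k)) : ell X ≤ greedyUnmatched X := by
  obtain ⟨M, _, h⟩ := exists_greedyTrace X
  exact Nat.sInf_le ⟨M, h.isNCMatching, by rw [greedyUnmatched_eq, h.card_eq]⟩

end Matching

section Classes

variable {k : ℕ}

def IsInverseFree (w : List (Letter k)) : Prop := ∀ x ∈ w, x.bar ∉ w

theorem isInverseFree_greedyStep {w : List (Letter k)} (hw : IsInverseFree w) (x : Letter k) :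
    IsInverseFree (greedyStep w x) := by
  by_cases hx : x.bar ∈ w
  · rw [greedyStep_of_mem hx]
    exact fun y hy hby => hw y (List.mem_of_mem_take hy) (List.mem_of_mem_take hby)
  · rw [greedyStep_of_not_mem hx]
    intro y hy hby
    simp only [List.mem_append, List.mem_singleton] at hy hby
    rcases hy with hy | rfl <;> rcases hby with hby | hby
    · exact hw y hy hby
    · exact hx (by rw [← hby, Letter.bar_bar]; exact hy)
    · exact hx hby
    · exact y.bar_ne hby

theorem isInverseFree_greedyState (X : List (Letter k)) : IsInverseFree (greedyState X) := by
  induction X using List.reverseRecOn with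
  | nil => simp [IsInverseFree]
  | append_singleton X x ih => rw [greedyState_append]; exact isInverseFree_greedyStep ih x

def classes (w : List (Letter k)) : List (Fin k) := w.map Prod.fst

theorem mem_classes {w : List (Letter k)} {i : Fin k} :
    i ∈ classes w ↔ ∃ b, (i, b) ∈ w := by
  simp [classes]

theorem IsInverseFree.classes_greedyStep_of_mem {w : List (Letter k)} (hw : IsInverseFree w)
    {x : Letter k} (hx : x.bar ∈ w) :
    classes (greedyStep w x) = (classes w).takeBeforeLast x.1 := by
  rw [greedyStep_of_mem hx]
  refine (List.takeBeforeLast_map_of_forall (f := Prod.fst) (a := x.bar) ?_).symm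
  obtain ⟨j, c⟩ := x
  rintro ⟨i, b⟩ hy (rfl : i = j)
  by_contra hne
  obtain rfl : b = c := by cases b <;> cases c <;> simp_all [Letter.bar]
  exact hw _ hy hx

theorem classes_greedyStep_of_not_mem {w : List (Letter k)} {x : Letter k} (hx : x.bar ∉ w) :
    classes (greedyStep w x) = classes w ++ [x.1] := by
  rw [greedyStep_of_not_mem hx, classes, classes, List.map_append, List.map_singleton]

theorem IsInverseFree.exists_bool_of_mem_classes {w : List (Letter k)} (hw : IsInverseFree w)
    {i : Fin k} (hi : i ∈ classes w) :
    ∃ b, Letter.bar (i, !b) ∈ w ∧ Letter.bar (i, b) ∉ w := by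
  obtain ⟨b, hb⟩ := mem_classes.1 hi
  exact ⟨b, by simpa [Letter.bar] using hb, hw _ hb⟩

theorem bar_not_mem_of_not_mem_classes {w : List (Letter k)} {i : Fin k} (hi : i ∉ classes w)
    (b : Bool) : Letter.bar (i, b) ∉ w :=
  fun h => hi (mem_classes.2 ⟨!b, h⟩)

theorem sum_bool_eq_add_not {M : Type*} [AddCommMonoid M] (f : Bool → M) (b : Bool) :
    ∑ c, f c = f b + f !b := by
  cases b <;> simp [add_comm]

theorem IsInverseFree.sum_bool_classes_greedyStep {w : List (Letter k)} (hw : IsInverseFree w)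
    (G : List (Fin k) → ℝ) (i : Fin k) :
    ∑ b, G (classes (greedyStep w (i, b))) =
      if i ∈ classes w then G (classes w ++ [i]) + G ((classes w).takeBeforeLast i)
      else 2 * G (classes w ++ [i]) := by
  split_ifs with hi
  · obtain ⟨b, hcut, happ⟩ := hw.exists_bool_of_mem_classes hi
    rw [sum_bool_eq_add_not _ b, classes_greedyStep_of_not_mem happ,
      hw.classes_greedyStep_of_mem hcut]
  · simp only [Fintype.sum_bool,
      classes_greedyStep_of_not_mem (bar_not_mem_of_not_mem_classes hi _)]
    ring

theorem IsInverseFree.sum_bool_length_greedyStep_lt {w : List (Letter k)} (hw : IsInverseFree w)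
    (i : Fin k) :
    ∑ b, (if (greedyStep w (i, b)).length < w.length then (1 : ℝ) else 0) =
      if i ∈ classes w then 1 else 0 := by
  have grow : ∀ b, Letter.bar (i, b) ∉ w → ¬ (greedyStep w (i, b)).length < w.length :=
    fun b hb => by simp [greedyStep_of_not_mem hb]
  split_ifs with hi
  · obtain ⟨b, hcut, happ⟩ := hw.exists_bool_of_mem_classes hi
    rw [sum_bool_eq_add_not _ b, if_neg (grow b happ), if_pos (length_greedyStep_of_mem hcut)]
    norm_num
  · simp [grow _ (bar_not_mem_of_not_mem_classes hi _)]

/-- `2k` times the one-step expectation of `G` for the greedy chain projected to letter classes. -/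
def classStepSum (G : List (Fin k) → ℝ) (s : List (Fin k)) : ℝ :=
  ∑ i, if i ∈ s then G (s ++ [i]) + G (s.takeBeforeLast i) else 2 * G (s ++ [i])

theorem IsInverseFree.sum_classes_greedyStep {w : List (Letter k)} (hw : IsInverseFree w)
    (G : List (Fin k) → ℝ) :
    ∑ x, G (classes (greedyStep w x)) = classStepSum G (classes w) := by
  rw [Fintype.sum_prod_type]
  exact Finset.sum_congr rfl fun i _ => hw.sum_bool_classes_greedyStep G i

theorem IsInverseFree.sum_length_greedyStep_lt {w : List (Letter k)} (hw : IsInverseFree w) :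
    ∑ x, (if (greedyStep w x).length < w.length then (1 : ℝ) else 0) =
      ∑ i, if i ∈ classes w then 1 else 0 := by
  rw [Fintype.sum_prod_type]
  exact Finset.sum_congr rfl fun i _ => hw.sum_bool_length_greedyStep_lt i

end Classes

def Mixed (s : List (Fin 2)) : Prop := 0 ∈ s ∧ 1 ∈ s

instance : DecidablePred Mixed := fun _ => instDecidableAnd

theorem Mixed.length_takeBeforeLast_lt {s : List (Fin 2)} (h : Mixed s) (i : Fin 2) :
    (s.takeBeforeLast i).length < s.length := by
  fin_cases i
  exacts [List.length_takeBeforeLast_lt h.1, List.length_takeBeforeLast_lt h.2]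

theorem Mixed.append {s : List (Fin 2)} (h : Mixed s) (i : Fin 2) : Mixed (s ++ [i]) :=
  ⟨List.mem_append_left _ h.1, List.mem_append_left _ h.2⟩

theorem not_mixed_replicate (m : ℕ) (i : Fin 2) : ¬ Mixed (List.replicate m i) := by
  rintro ⟨h0, h1⟩
  exact absurd ((List.eq_of_mem_replicate h0).trans (List.eq_of_mem_replicate h1).symm) (by simp)

theorem mixed_replicate_append {i j : Fin 2} (hij : i ≠ j) (m : ℕ) :
    Mixed (List.replicate (m + 1) i ++ [j]) := by
  fin_cases i <;> fin_cases j <;> simp_all [Mixed]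

theorem eq_nil_or_mixed_or_eq_replicate (s : List (Fin 2)) :
    s = [] ∨ Mixed s ∨ ∃ i m, s = List.replicate (m + 1) i := by
  rcases s with _ | ⟨i, t⟩
  · exact .inl rfl
  by_cases h : Mixed (i :: t)
  · exact .inr (.inl h)
  refine .inr (.inr ⟨i, t.length, List.eq_replicate_of_mem fun j hj => ?_⟩)
  by_contra hji
  refine h ?_
  fin_cases i <;> fin_cases j <;> simp_all [Mixed]

theorem mixed_induction {P : List (Fin 2) → Prop} (base : ∀ s, ¬ Mixed s → P s)
    (step : ∀ s, Mixed s → P (s.takeBeforeLast 0) → P (s.takeBeforeLast 1) → P s) :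
    ∀ s, P s
  | s =>
    if h : Mixed s then
      step s h (mixed_induction base step _) (mixed_induction base step _)
    else base s h
termination_by s => s.length
decreasing_by all_goals exact h.length_takeBeforeLast_lt _

noncomputable def cutRec (c a : ℝ) (f : ℕ → ℝ) (s : List (Fin 2)) : ℝ :=
  if _ : Mixed s then
    c + a * (cutRec c a f (s.takeBeforeLast 0) + cutRec c a f (s.takeBeforeLast 1))
  else f s.length
termination_by s.length
decreasing_by all_goals exact ‹Mixed s›.length_takeBeforeLast_lt _

section CutRec

variable {c a : ℝ} {f : ℕ → ℝ}

theorem cutRec_of_mixed {s : List (Fin 2)} (h : Mixed s) :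
    cutRec c a f s =
      c + a * (cutRec c a f (s.takeBeforeLast 0) + cutRec c a f (s.takeBeforeLast 1)) := by
  rw [cutRec, dif_pos h]

theorem cutRec_of_not_mixed {s : List (Fin 2)} (h : ¬ Mixed s) : cutRec c a f s = f s.length := by
  rw [cutRec, dif_neg h]

theorem cutRec_replicate (m : ℕ) (i : Fin 2) : cutRec c a f (List.replicate m i) = f m := by
  rw [cutRec_of_not_mixed (not_mixed_replicate m i), List.length_replicate]

theorem cutRec_nil : cutRec c a f [] = f 0 :=
  cutRec_replicate 0 0

theorem cutRec_singleton (i : Fin 2) : cutRec c a f [i] = f 1 :=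
  cutRec_replicate 1 i

theorem cutRec_replicate_append {i j : Fin 2} (hij : i ≠ j) (m : ℕ) :
    cutRec c a f (List.replicate (m + 1) i ++ [j]) = c + a * (f m + f (m + 1)) := by
  have cut_i : (List.replicate (m + 1) i ++ [j]).takeBeforeLast i = List.replicate m i := by
    rw [List.takeBeforeLast_append_of_ne hij.symm (by simp), List.takeBeforeLast_replicate]
  rw [cutRec_of_mixed (mixed_replicate_append hij m)]
  fin_cases i <;> fin_cases j <;> simp_all [List.takeBeforeLast_append_self, cutRec_replicate,
    add_comm]

theorem classStepSum_cutRec_of_mixed {s : List (Fin 2)} (h : Mixed s) :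
    classStepSum (cutRec c a f) s = 2 * c + 2 * a * cutRec c a f s +
      (1 + a) * (cutRec c a f (s.takeBeforeLast 0) + cutRec c a f (s.takeBeforeLast 1)) := by
  rw [classStepSum, Fin.sum_univ_two, if_pos h.1, if_pos h.2, cutRec_of_mixed (h.append 0),
    cutRec_of_mixed (h.append 1), List.takeBeforeLast_append_self,
    List.takeBeforeLast_append_self, List.takeBeforeLast_append_of_ne (by simp) h.1,
    List.takeBeforeLast_append_of_ne (by simp) h.2]
  ring

theorem classStepSum_cutRec_replicate (m : ℕ) (i : Fin 2) :
    classStepSum (cutRec c a f) (List.replicate (m + 1) i) =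
      f (m + 2) + f m + 2 * (c + a * (f m + f (m + 1))) := by
  fin_cases i <;>
    simp only [classStepSum, Fin.sum_univ_two, Fin.zero_eta, Fin.mk_one, Fin.isValue,
      List.mem_replicate, ne_eq, Nat.add_eq_zero_iff, one_ne_zero, zero_ne_one, and_false,
      not_false_eq_true, true_and, ↓reduceIte, ← List.replicate_succ', cutRec_replicate,
      List.takeBeforeLast_replicate, cutRec_replicate_append]
  ring

theorem classStepSum_cutRec_nil : classStepSum (cutRec c a f) [] = 4 * f 1 := by
  simp only [classStepSum, Fin.sum_univ_two, List.not_mem_nil, if_false, List.nil_append,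
    cutRec_singleton]
  ring

end CutRec

noncomputable def potential : List (Fin 2) → ℝ := cutRec (6 / 13) (1 / 2) fun m => 5 * m / 13

noncomputable def lyapunov : List (Fin 2) → ℝ := cutRec 0 (21 / 40) fun m => (10 / 7) ^ m

theorem potential_nil : potential [] = 0 := by
  rw [potential, cutRec_nil, Nat.cast_zero, mul_zero, zero_div]

theorem lyapunov_nil : lyapunov [] = 1 := by
  rw [lyapunov, cutRec_nil, pow_zero]

theorem classStepSum_potential (s : List (Fin 2)) :
    classStepSum potential s + ∑ i, (if i ∈ s then 1 else 0) = 4 * potential s + 20 / 13 := by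
  rcases eq_nil_or_mixed_or_eq_replicate s with rfl | h | ⟨i, m, rfl⟩
  · rw [potential, classStepSum_cutRec_nil, ← potential, potential_nil]
    norm_num
  · rw [potential, classStepSum_cutRec_of_mixed h, cutRec_of_mixed h, Fin.sum_univ_two,
      if_pos h.1, if_pos h.2]
    ring
  · rw [potential, classStepSum_cutRec_replicate, cutRec_replicate]
    simp only [List.mem_replicate, ne_eq, Nat.add_one_ne_zero, not_false_eq_true, true_and,
      Finset.sum_ite_eq', Finset.mem_univ, if_true]
    push_cast
    ring

theorem classStepSum_lyapunov_le (s : List (Fin 2)) :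
    classStepSum lyapunov s ≤ 1661 / 420 * lyapunov s + 739 / 420 := by
  rcases eq_nil_or_mixed_or_eq_replicate s with rfl | h | ⟨i, m, rfl⟩
  · rw [lyapunov, classStepSum_cutRec_nil, ← lyapunov, lyapunov_nil]
    norm_num
  · rw [lyapunov, classStepSum_cutRec_of_mixed h, cutRec_of_mixed h]
    linarith [cutRec_of_mixed (c := 0) (a := 21 / 40) (f := fun m => (10 / 7 : ℝ) ^ m) h]
  · rw [lyapunov, classStepSum_cutRec_replicate, cutRec_replicate, pow_succ, pow_succ]
    nlinarith [pow_nonneg (show (0 : ℝ) ≤ 10 / 7 by norm_num) m]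

theorem lyapunov_potential_bounds (s : List (Fin 2)) :
    1 ≤ lyapunov s ∧ 0 ≤ potential s ∧ potential s ≤ 126 / 13 * (lyapunov s - 1) := by
  induction s using mixed_induction with
  | base s h =>
    rw [lyapunov, potential, cutRec_of_not_mixed h, cutRec_of_not_mixed h]
    have bernoulli := one_add_mul_le_pow (show (-2 : ℝ) ≤ 3 / 7 by norm_num) s.length
    norm_num at bernoulli
    refine ⟨by linarith, by positivity, by linarith⟩
  | step s h ih₀ ih₁ =>
    rw [lyapunov, potential, cutRec_of_mixed h, cutRec_of_mixed h, ← lyapunov, ← potential]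
    refine ⟨by linarith, by linarith, by linarith⟩

theorem sum_const_letter (c : ℝ) : ∑ _x : Letter 2, c = 4 * c := by
  simp

theorem sum_const_word (n : ℕ) (c : ℝ) : ∑ _u : Fin n → Letter 2, c = 4 ^ n * c := by
  simp

theorem sum_letters_matches_add_potential (X : List (Letter 2)) :
    ∑ x, ((greedyMatches (X ++ [x]) : ℝ) + potential (classes (greedyState (X ++ [x])))) =
      4 * (greedyMatches X + potential (classes (greedyState X))) + 20 / 13 := by
  have hw := isInverseFree_greedyState X
  have hmatches : ∀ x, (greedyMatches (X ++ [x]) : ℝ) = greedyMatches X +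
      if (greedyStep (greedyState X) x).length < (greedyState X).length then 1 else 0 := by
    intro x
    rw [greedyMatches_append]
    split_ifs <;> simp
  simp only [hmatches, greedyState_append, Finset.sum_add_distrib, hw.sum_length_greedyStep_lt,
    hw.sum_classes_greedyStep]
  rw [sum_const_letter]
  linarith [classStepSum_potential (classes (greedyState X))]

theorem sum_matches_add_potential (n : ℕ) :
    ∑ u : Fin n → Letter 2,
      ((greedyMatches (List.ofFn u) : ℝ) + potential (classes (greedyState (List.ofFn u)))) =
      5 * n / 13 * 4 ^ n := by
  induction n with
  | zero => simp [classes, potential_nil]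
  | succ n ih =>
    rw [sum_ofFn_succ (fun X => (greedyMatches X : ℝ) + potential (classes (greedyState X))),
      Finset.sum_congr rfl fun u _ => sum_letters_matches_add_potential (List.ofFn u),
      Finset.sum_add_distrib, ← Finset.mul_sum, ih, sum_const_word]
    push_cast
    ring

theorem sum_lyapunov_le (n : ℕ) :
    ∑ u : Fin n → Letter 2, lyapunov (classes (greedyState (List.ofFn u))) ≤
      739 / 19 * 4 ^ n := by
  induction n with
  | zero => norm_num [classes, lyapunov_nil]
  | succ n ih =>
    rw [sum_ofFn_succ (fun X => lyapunov (classes (greedyState X)))]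
    calc ∑ u : Fin n → Letter 2, ∑ x, lyapunov (classes (greedyState (List.ofFn u ++ [x])))
        ≤ ∑ u : Fin n → Letter 2,
            (1661 / 420 * lyapunov (classes (greedyState (List.ofFn u))) + 739 / 420) := by
          refine Finset.sum_le_sum fun u _ => ?_
          simp only [greedyState_append,
            (isInverseFree_greedyState _).sum_classes_greedyStep, classStepSum_lyapunov_le]
      _ ≤ 739 / 19 * 4 ^ (n + 1) := by
          rw [Finset.sum_add_distrib, ← Finset.mul_sum, sum_const_word, pow_succ]
          linarith

theorem sum_greedyUnmatched_eq (n : ℕ) :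
    ∑ u : Fin n → Letter 2, (greedyUnmatched (List.ofFn u) : ℝ) =
      3 * n / 13 * 4 ^ n + 2 * ∑ u : Fin n → Letter 2,
        potential (classes (greedyState (List.ofFn u))) := by
  have h := sum_matches_add_potential n
  simp only [greedyUnmatched_cast, List.length_ofFn, Finset.sum_sub_distrib,
    Finset.sum_add_distrib, ← Finset.mul_sum] at h ⊢
  rw [sum_const_word]
  linarith

theorem sum_potential_nonneg (n : ℕ) :
    0 ≤ ∑ u : Fin n → Letter 2, potential (classes (greedyState (List.ofFn u))) :=
  Finset.sum_nonneg fun _ _ => (lyapunov_potential_bounds _).2.1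

theorem sum_potential_le (n : ℕ) :
    ∑ u : Fin n → Letter 2, potential (classes (greedyState (List.ofFn u))) ≤
      90720 / 247 * 4 ^ n :=
  calc ∑ u : Fin n → Letter 2, potential (classes (greedyState (List.ofFn u)))
      ≤ ∑ u : Fin n → Letter 2,
          126 / 13 * (lyapunov (classes (greedyState (List.ofFn u))) - 1) :=
        Finset.sum_le_sum fun _ _ => (lyapunov_potential_bounds _).2.2
    _ = 126 / 13 * (∑ u : Fin n → Letter 2, lyapunov (classes (greedyState (List.ofFn u))) -
        4 ^ n) := by
        rw [← Finset.mul_sum, Finset.sum_sub_distrib, sum_const_word, mul_one]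
    _ ≤ 90720 / 247 * 4 ^ n := by
        linarith [sum_lyapunov_le n]

open Filter Topology in
theorem tendsto_greedyUnmatched_fraction_two :
    Tendsto (fun n : ℕ =>
        (∑ w : Fin n → Letter 2, (greedyUnmatched (List.ofFn w) : ℝ)) / ((2 * 2) ^ n * n))
      atTop (𝓝 (3 / 13)) := by
  set P : ℕ → ℝ := fun n =>
    ∑ u : Fin n → Letter 2, potential (classes (greedyState (List.ofFn u)))
  have hP : ∀ n, 0 ≤ P n / 4 ^ n ∧ P n / 4 ^ n ≤ 90720 / 247 := fun n =>
    ⟨by have := sum_potential_nonneg n; positivity,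
      (div_le_iff₀ (by positivity)).2 (sum_potential_le n)⟩
  have hratio : ∀ n : ℕ, 1 ≤ n →
      (∑ w : Fin n → Letter 2, (greedyUnmatched (List.ofFn w) : ℝ)) / ((2 * 2) ^ n * n) =
        3 / 13 + 2 * (P n / 4 ^ n) / n := by
    intro n hn
    rw [sum_greedyUnmatched_eq]
    field_simp
    ring
  have hbound :
      Tendsto (fun n : ℕ => 3 / 13 + 2 * (90720 / 247) / (n : ℝ)) atTop (𝓝 (3 / 13)) := by
    simpa using (tendsto_const_div_atTop_nhds_zero_nat (2 * (90720 / 247) : ℝ)).const_add (3 / 13)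
  refine tendsto_of_tendsto_of_tendsto_of_le_of_le' tendsto_const_nhds hbound ?_ ?_ <;>
    filter_upwards [eventually_ge_atTop 1] with n hn <;> rw [hratio n hn]
  · have := (hP n).1
    simp only [le_add_iff_nonneg_right]
    positivity
  · have := (hP n).2
    gcongr

theorem lambda_le_sum_greedyUnmatched_div (k : ℕ) {n : ℕ} (hn : 0 < n) :
    lambda k ≤
      (∑ w : Fin n → Letter k, (greedyUnmatched (List.ofFn w) : ℝ)) / ((2 * k) ^ n * n) := by
  have hbdd : BddBelow (Set.range fun n : ℕ+ => Lk k n / n) :=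
    ⟨0, by rintro _ ⟨n, rfl⟩; unfold Lk; positivity⟩
  calc lambda k ≤ Lk k n / n := ciInf_le hbdd ⟨n, hn⟩
    _ ≤ _ := by
      rw [Lk, div_div]
      gcongr with w
      exact_mod_cast ell_le_greedyUnmatched _

/-- For `k = 2`, the expected fraction of letters left unmatched by the one-sided greedy
algorithm on a uniform random word converges to `3/13`; consequently `λ₂ ≤ 3/13`. -/
theorem greedy_fraction_two :
    Filter.Tendsto
      (fun n : ℕ =>
        (∑ w : Fin n → Letter 2, (greedyUnmatched (List.ofFn w) : ℝ)) / ((2 * 2) ^ n * n))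
      Filter.atTop (nhds (3 / 13)) ∧
    lambda 2 ≤ 3 / 13 := by
  have hlim := tendsto_greedyUnmatched_fraction_two
  refine ⟨hlim, ge_of_tendsto hlim ?_⟩
  filter_upwards [Filter.eventually_gt_atTop 0] with n hn
  simpa using lambda_le_sum_greedyUnmatched_div 2 hn
end
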